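/- Let m ≤ n and X ∈ Z_h^{m×n}. Then X has a right inverse (there exists Y ∈ Z_h^{n×m} with X·Y = I_m) if and only if the McCoy rank of X equals m. -/

import Mathlib

open scoped Matrix BigOperators

namespace Paper

def HasRightInv {R : Type*} [CommRing R] {m n : ℕ} (A : Matrix (Fin m) (Fin n) R) : Prop :=
  ∃ B : Matrix (Fin n) (Fin m) R, A * B = 1

def rowSpace {R : Type*} [CommRing R] {m n : ℕ} (A : Matrix (Fin m) (Fin n) R) :
    Submodule R (Fin n → R) :=
  Submodule.span R (Set.range fun i => A i)

def IsSubspaceOfDim {R : Type*} [CommRing R] (n m : ℕ) (V : Submodule R (Fin n → R)) : Prop :=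
  ∃ A : Matrix (Fin m) (Fin n) R, HasRightInv A ∧ rowSpace A = V

def Unimodular {R : Type*} [CommRing R] {m n : ℕ} (v : Fin m → Fin n → R) : Prop :=
  HasRightInv (Matrix.of v)

noncomputable def sdim {R : Type*} [CommRing R] {n : ℕ} (V : Submodule R (Fin n → R)) : ℕ :=
  sSup {m | ∃ v : Fin m → Fin n → R, (∀ i, v i ∈ V) ∧ Unimodular v}

def minorsIdeal {R : Type*} [CommRing R] {m n : ℕ} (A : Matrix (Fin m) (Fin n) R) (k : ℕ) :
    Ideal R :=
  Ideal.span {d | ∃ (f : Fin k → Fin m) (g : Fin k → Fin n), d = (A.submatrix f g).det}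

noncomputable def mccoyRank {R : Type*} [CommRing R] {m n : ℕ} (A : Matrix (Fin m) (Fin n) R) : ℕ :=
  sSup {k | ∀ x : R, (∀ y ∈ minorsIdeal A k, x * y = 0) → x = 0}

noncomputable def innerRank {R : Type*} [CommRing R] {m n : ℕ} (A : Matrix (Fin m) (Fin n) R) : ℕ :=
  sInf {r | ∃ (B : Matrix (Fin m) (Fin r) R) (C : Matrix (Fin r) (Fin n) R), A = B * C}

noncomputable def joinDim {R : Type*} [CommRing R] {n : ℕ} (A B : Submodule R (Fin n → R)) : ℕ :=
  sInf {d | ∃ W : Submodule R (Fin n → R), IsSubspaceOfDim n d W ∧ A ≤ W ∧ B ≤ W}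

def mapSub {R S : Type*} [CommRing R] [CommRing S] (f : R →+* S) {n : ℕ}
    (V : Submodule R (Fin n → R)) : Submodule S (Fin n → S) :=
  Submodule.span S ((fun v (j : Fin n) => f (v j)) '' (V : Set (Fin n → R)))

def dualSub {R : Type*} [CommRing R] {n : ℕ} (V : Submodule R (Fin n → R)) :
    Submodule R (Fin n → R) where
  carrier := {y | ∀ x ∈ V, ∑ j, y j * x j = 0}
  add_mem' := by
    intro a b ha hb
    intro x hx
    have h1 : ∑ j, (a + b) j * x j = (∑ j, a j * x j) + ∑ j, b j * x j := by
      rw [← Finset.sum_add_distrib]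
      exact Finset.sum_congr rfl fun j _ => by simp [add_mul]
    simp only [Set.mem_setOf_eq] at ha hb
    rw [h1, ha x hx, hb x hx, add_zero]
  zero_mem' := by
    intro x hx
    simp
  smul_mem' := by
    intro c a ha
    intro x hx
    simp only [Set.mem_setOf_eq] at ha
    have h1 : ∑ j, (c • a) j * x j = c * ∑ j, a j * x j := by
      rw [Finset.mul_sum]
      exact Finset.sum_congr rfl fun j _ => by simp [mul_assoc]
    rw [h1, ha x hx, mul_zero]

def grassmannGraph (R : Type*) [CommRing R] (m n r : ℕ) :
    SimpleGraph {V : Submodule R (Fin n → R) // IsSubspaceOfDim n m V} where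
  Adj A B := A ≠ B ∧ ((m : ℤ) - (r : ℤ) < (sdim (A.1 ⊓ B.1) : ℤ))
  symm := by
    constructor
    intro A B hAB
    refine ⟨hAB.1.symm, ?_⟩
    rw [inf_comm]
    exact hAB.2
  loopless := by
    constructor
    intro A hA
    exact hA.1 rfl

noncomputable def cliqueNum {V : Type*} (G : SimpleGraph V) : ℕ :=
  sSup {c | ∃ S : Set V, G.IsClique S ∧ S.ncard = c}

noncomputable def indepNum {V : Type*} (G : SimpleGraph V) : ℕ :=
  sSup {c | ∃ S : Set V, (S.Pairwise fun a b => ¬ G.Adj a b) ∧ S.ncard = c}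

noncomputable def gaussQ (q a b : ℕ) : ℚ :=
  ∏ j ∈ Finset.range b, ((q : ℚ) ^ (a - j) - 1) / ((q : ℚ) ^ (b - j) - 1)

/-!
Over any commutative ring, `X` has a right inverse iff `I_m(X) = ⊤`. If `X * Y = 1`, expanding
`det (X * Y) = 1` by multilinearity in the rows writes `1` as a combination of maximal minors of
`X`. Conversely, if `M` is the square submatrix of `X` on columns `g`, then `X` times the column
selection `g` times `adj M` is `det M • 1`, so the `d` with `d • 1 = X * Y` for some `Y` form an
ideal containing `I_m(X)`. Since `I_k(X) = 0` for `k > m`, the McCoy rank is `m`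
exactly when `I_m(X)` has zero annihilator, and in an Artinian principal ideal ring
such as `ℤ/h` the only such ideal is `⊤`: its generator is a non-zero-divisor, hence a unit.
-/

section MaximalMinors

variable {R : Type*} [CommRing R] {m n : ℕ}

lemma det_mul_eq_sum_prod_mul_det_submatrix (A : Matrix (Fin m) (Fin n) R)
    (B : Matrix (Fin n) (Fin m) R) :
    (A * B).det = ∑ r : Fin m → Fin n, (∏ i, A i (r i)) * (B.submatrix r id).det := by
  have hrows : A * B = Matrix.of fun i => ∑ k, A i k • B k := by
    ext i j
    simp [Matrix.mul_apply, Finset.sum_apply]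
  rw [hrows]
  refine ((Matrix.detRowAlternating (R := R) (n := Fin m)).toMultilinearMap.map_sum
    (fun i k => A i k • B k)).trans (Finset.sum_congr rfl fun r _ => ?_)
  exact ((Matrix.detRowAlternating (R := R) (n := Fin m)).toMultilinearMap.map_smul_univ
    (fun i => A i (r i)) (fun i => B (r i))).trans (by rw [smul_eq_mul]; rfl)

lemma minorsIdeal_zero (A : Matrix (Fin m) (Fin n) R) : minorsIdeal A 0 = ⊤ :=
  (Ideal.eq_top_iff_one _).2 <|
    Ideal.subset_span ⟨Fin.elim0, Fin.elim0, Matrix.det_fin_zero.symm⟩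

lemma minorsIdeal_eq_bot_of_lt (A : Matrix (Fin m) (Fin n) R) {k : ℕ} (hk : m < k) :
    minorsIdeal A k = ⊥ := by
  refine le_bot_iff.1 (Ideal.span_le.2 ?_)
  rintro d ⟨f, g, rfl⟩
  obtain ⟨i, j, hne, hij⟩ := Fintype.exists_ne_map_eq_of_card_lt f (by simpa using hk)
  exact Matrix.det_zero_of_row_eq hne (funext fun l => by simp [hij])

lemma one_mem_minorsIdeal_of_hasRightInv {X : Matrix (Fin m) (Fin n) R} (hX : HasRightInv X) :
    (1 : R) ∈ minorsIdeal X m := by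
  obtain ⟨Y, hY⟩ := hX
  have hdet : (1 : R) = (Yᵀ * Xᵀ).det := by
    rw [← Matrix.transpose_mul, hY, Matrix.transpose_one, Matrix.det_one]
  rw [hdet, det_mul_eq_sum_prod_mul_det_submatrix]
  refine Ideal.sum_mem _ fun r _ => Ideal.mul_mem_left _ _ ?_
  rw [← Matrix.transpose_submatrix, Matrix.det_transpose]
  exact Ideal.subset_span ⟨id, r, rfl⟩

def scaledRightInvIdeal (X : Matrix (Fin m) (Fin n) R) : Ideal R where
  carrier := {d | ∃ Y : Matrix (Fin n) (Fin m) R, X * Y = d • 1}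
  zero_mem' := ⟨0, by simp⟩
  add_mem' := by
    rintro a b ⟨Y, hY⟩ ⟨Z, hZ⟩
    exact ⟨Y + Z, by rw [Matrix.mul_add, hY, hZ, add_smul]⟩
  smul_mem' := by
    rintro c d ⟨Y, hY⟩
    exact ⟨c • Y, by rw [Matrix.mul_smul, hY, smul_smul, smul_eq_mul]⟩

lemma det_submatrix_mem_scaledRightInvIdeal (X : Matrix (Fin m) (Fin n) R) (g : Fin m → Fin n) :
    (X.submatrix id g).det ∈ scaledRightInvIdeal X := by
  classical
  refine ⟨(1 : Matrix (Fin n) (Fin n) R).submatrix (Equiv.refl _) g * (X.submatrix id g).adjugate,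
    ?_⟩
  rw [← Matrix.mul_assoc, Matrix.mul_submatrix_one, Equiv.refl_symm, Equiv.coe_refl,
    Function.id_comp, Matrix.mul_adjugate]

lemma minorsIdeal_le_scaledRightInvIdeal (X : Matrix (Fin m) (Fin n) R) :
    minorsIdeal X m ≤ scaledRightInvIdeal X := by
  classical
  refine Ideal.span_le.2 ?_
  rintro d ⟨f, g, rfl⟩
  by_cases hf : Function.Injective f
  · -- a square row selection is a permutation, which only changes the sign
    let σ : Equiv.Perm (Fin m) := Equiv.ofBijective f (Finite.injective_iff_bijective.1 hf)
    have hσ : X.submatrix f g = (X.submatrix id g).submatrix σ id := rfl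
    rw [hσ, Matrix.det_permute]
    exact Ideal.mul_mem_left _ _ (det_submatrix_mem_scaledRightInvIdeal X g)
  · obtain ⟨i, j, hij, hne⟩ : ∃ i j, f i = f j ∧ i ≠ j := by
      simpa [Function.Injective] using hf
    rw [Matrix.det_zero_of_row_eq hne (funext fun l => by simp [hij])]
    exact Ideal.zero_mem _

theorem hasRightInv_iff_minorsIdeal_eq_top (X : Matrix (Fin m) (Fin n) R) :
    HasRightInv X ↔ minorsIdeal X m = ⊤ := by
  refine ⟨fun hX => (Ideal.eq_top_iff_one _).2 (one_mem_minorsIdeal_of_hasRightInv hX),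
    fun htop => ?_⟩
  obtain ⟨Y, hY⟩ := minorsIdeal_le_scaledRightInvIdeal X (htop ▸ Submodule.mem_top (x := 1))
  exact ⟨Y, by rw [hY, one_smul]⟩

end MaximalMinors

theorem annihilator_top_eq_bot {R : Type*} [CommRing R] : (⊤ : Ideal R).annihilator = ⊥ := by
  rw [Submodule.annihilator_top, Module.annihilator_eq_bot]
  infer_instance

theorem eq_top_of_annihilator_eq_bot {R : Type*} [CommRing R] [IsArtinianRing R]
    [IsPrincipalIdealRing R] {I : Ideal R} (hI : I.annihilator = ⊥) : I = ⊤ := by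
  obtain ⟨d, rfl⟩ := (IsPrincipalIdealRing.principal I).principal
  refine Ideal.span_singleton_eq_top.2 (IsArtinianRing.isUnit_of_mem_nonZeroDivisors ?_)
  refine mem_nonZeroDivisors_iff_right.2 fun x hx => ?_
  rw [← Submodule.mem_bot R, ← hI, Submodule.mem_annihilator_span_singleton, smul_eq_mul, hx]

lemma mccoyRank_eq_iff_annihilator_eq_bot {R : Type*} [CommRing R] [Nontrivial R] {m n : ℕ}
    (A : Matrix (Fin m) (Fin n) R) :
    mccoyRank A = m ↔ (minorsIdeal A m).annihilator = ⊥ := by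
  have hS : {k | ∀ x : R, (∀ y ∈ minorsIdeal A k, x * y = 0) → x = 0} =
      {k | (minorsIdeal A k).annihilator = ⊥} := by
    ext k
    simp [eq_bot_iff, SetLike.le_def, Submodule.mem_annihilator]
  rw [mccoyRank, hS]
  have hle : ∀ k ∈ {k | (minorsIdeal A k).annihilator = ⊥}, k ≤ m := fun k hk => by
    by_contra! hlt
    rw [Set.mem_ofPred_eq, minorsIdeal_eq_bot_of_lt A hlt, Submodule.annihilator_bot] at hk
    exact top_ne_bot hk
  have hne : {k | (minorsIdeal A k).annihilator = ⊥}.Nonempty :=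
    ⟨0, by rw [Set.mem_ofPred_eq, minorsIdeal_zero, annihilator_top_eq_bot]⟩
  refine ⟨fun hr => ?_, fun hm => le_antisymm (csSup_le hne hle) (le_csSup ⟨m, hle⟩ hm)⟩
  simpa only [hr, Set.mem_ofPred_eq] using Nat.sSup_mem hne ⟨m, hle⟩

theorem hasRightInv_iff_mccoyRank_eq {R : Type*} [CommRing R] [Nontrivial R] [IsArtinianRing R]
    [IsPrincipalIdealRing R] {m n : ℕ} (X : Matrix (Fin m) (Fin n) R) :
    HasRightInv X ↔ mccoyRank X = m := by
  rw [hasRightInv_iff_minorsIdeal_eq_top, mccoyRank_eq_iff_annihilator_eq_bot]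
  refine ⟨fun htop => ?_, eq_top_of_annihilator_eq_bot⟩
  rw [htop, annihilator_top_eq_bot]

theorem stmt_2_general (t : ℕ) (ht : 1 ≤ t) (p s : Fin t → ℕ)
    (hp : ∀ i, (p i).Prime) (hs : ∀ i, 1 ≤ s i)
    (h : ℕ) (hh : h = ∏ i, p i ^ s i)
    (m n : ℕ)
    (X : Matrix (Fin m) (Fin n) (ZMod h)) :
    HasRightInv X ↔ mccoyRank X = m := by
  have h_ne_zero : h ≠ 0 :=
    hh ▸ Finset.prod_ne_zero_iff.2 fun i _ => pow_ne_zero _ (hp i).ne_zero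
  have hp0 : p ⟨0, ht⟩ ∣ h := hh ▸
    (dvd_pow_self _ (Nat.one_le_iff_ne_zero.1 (hs ⟨0, ht⟩))).trans
      (Finset.dvd_prod_of_mem _ (Finset.mem_univ _))
  have h_ne_one : h ≠ 1 := fun h1 => (hp ⟨0, ht⟩).ne_one (Nat.eq_one_of_dvd_one (h1 ▸ hp0))
  have : NeZero h := ⟨h_ne_zero⟩
  have : Fact (1 < h) := ⟨by omega⟩
  have : IsPrincipalIdealRing (ZMod h) :=
    IsPrincipalIdealRing.of_surjective (Int.castRingHom (ZMod h)) ZMod.intCast_surjective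
  exact hasRightInv_iff_mccoyRank_eq X

theorem stmt_2 (t : ℕ) (ht : 1 ≤ t) (p s : Fin t → ℕ)
    (hp : ∀ i, (p i).Prime) (hs : ∀ i, 1 ≤ s i) (hpinj : Function.Injective p)
    (h : ℕ) (hh : h = ∏ i, p i ^ s i)
    (m n : ℕ) (hmn : m ≤ n)
    (X : Matrix (Fin m) (Fin n) (ZMod h)) :
    HasRightInv X ↔ mccoyRank X = m :=
  stmt_2_general t ht p s hp hs h hh m n X

end Paper
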